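/- arXiv:2210.16150 — 11 statements merged into one kernel-verified Lean document; each statement's English description precedes it below -/
import Mathlib

section
/- Let u, v ∈ ℝ² be linearly independent and let P = {s·u + t·v : s, t ∈ [-1,1]} be the parallelogram with center at the origin spanned by u and v. Then there exist points a, b, c ∈ P with a + b + c = 0 such that P ⊆ (5/2)·conv{a,b,c}. -/
open Pointwise

lemma combo3_mem_convexHull {a b c : ℝ × ℝ} {α β γ : ℝ}
    (hα : 0 ≤ α) (hβ : 0 ≤ β) (hγ : 0 ≤ γ) (hsum : α + β + γ = 1) :
    α • a + β • b + γ • c ∈ convexHull ℝ ({a, b, c} : Set (ℝ × ℝ)) := by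
  have h := (convex_convexHull ℝ ({a, b, c} : Set (ℝ × ℝ))).sum_mem
    (t := Finset.univ) (w := ![α, β, γ]) (z := ![a, b, c])
    (by intro i _; fin_cases i <;> simpa)
    (by simp [Fin.sum_univ_three, hsum])
    (by
      intro i _
      fin_cases i
      · exact subset_convexHull ℝ _ (by simp)
      · exact subset_convexHull ℝ _ (by simp)
      · exact subset_convexHull ℝ _ (by simp))
  simpa [Fin.sum_univ_three, add_assoc] using h

theorem parallelogram_triangle_centroid_upper_bound
    (u v : ℝ × ℝ) (huv : LinearIndependent ℝ ![u, v])
    (P : Set (ℝ × ℝ))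
    (hP : P = {p : ℝ × ℝ | ∃ s ∈ Set.Icc (-1 : ℝ) 1, ∃ t ∈ Set.Icc (-1 : ℝ) 1,
      p = s • u + t • v}) :
    ∃ a b c : ℝ × ℝ, a ∈ P ∧ b ∈ P ∧ c ∈ P ∧ a + b + c = 0 ∧
      P ⊆ (5 / 2 : ℝ) • convexHull ℝ {a, b, c} := by
  refine ⟨(4/5 : ℝ) • u + (4/5 : ℝ) • v, (-1 : ℝ) • u + (1/5 : ℝ) • v,
    (1/5 : ℝ) • u + (-1 : ℝ) • v, ?_, ?_, ?_, ?_, ?_⟩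
  · rw [hP]; exact ⟨4/5, by norm_num, 4/5, by norm_num, rfl⟩
  · rw [hP]; exact ⟨-1, by norm_num, 1/5, by norm_num, rfl⟩
  · rw [hP]; exact ⟨1/5, by norm_num, -1, by norm_num, rfl⟩
  · module
  · intro p hp
    rw [hP] at hp
    obtain ⟨s, hs, t, ht, rfl⟩ := hp
    obtain ⟨hs1, hs2⟩ := hs
    obtain ⟨ht1, ht2⟩ := ht
    rw [Set.mem_smul_set]
    refine ⟨(1/3 + s/6 + t/6) • ((4/5 : ℝ) • u + (4/5 : ℝ) • v)
      + (1/3 - s/4 + t/12) • ((-1 : ℝ) • u + (1/5 : ℝ) • v)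
      + (1/3 + s/12 - t/4) • ((1/5 : ℝ) • u + (-1 : ℝ) • v), ?_, ?_⟩
    · exact combo3_mem_convexHull (by linarith) (by linarith) (by linarith) (by ring)
    · module
end

section
/- Let S = [-1,1] × [-1,1] ⊆ ℝ² and let Δ₀ = conv{(1, 1/2), (-1, 1/2), (0, -1)}. Then Δ₀ ⊆ S, the centroid of Δ₀ is the origin (i.e., (1,1/2) + (-1,1/2) + (0,-1) = (0,0)), and S ⊆ (5/2)·Δ₀. -/
open Pointwise

lemma combo3_mem_convexHull_s3 {p q r : ℝ × ℝ} {a b c : ℝ}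
    (ha : 0 ≤ a) (hb : 0 ≤ b) (hc : 0 ≤ c) (habc : a + b + c = 1) :
    a • p + b • q + c • r ∈ convexHull ℝ ({p, q, r} : Set (ℝ × ℝ)) := by
  have h := (convex_convexHull ℝ ({p, q, r} : Set (ℝ × ℝ))).sum_mem
    (t := (Finset.univ : Finset (Fin 3))) (w := ![a, b, c]) (z := ![p, q, r])
    (by intro i _; fin_cases i <;> simpa)
    (by simp [Fin.sum_univ_three, habc])
    (by intro i _; fin_cases i <;> exact subset_convexHull ℝ _ (by simp))
  simpa [Fin.sum_univ_three] using h

theorem extreme_triangle_in_square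
    (S : Set (ℝ × ℝ)) (hS : S = Set.Icc ((-1, -1) : ℝ × ℝ) (1, 1))
    (Δ₀ : Set (ℝ × ℝ))
    (hΔ₀ : Δ₀ = convexHull ℝ {((1 : ℝ), (1 / 2 : ℝ)), (-1, 1 / 2), (0, -1)}) :
    Δ₀ ⊆ S ∧
    ((1 : ℝ), (1 / 2 : ℝ)) + (-1, 1 / 2) + (0, -1) = (0, 0) ∧
    S ⊆ (5 / 2 : ℝ) • Δ₀ := by
  subst hS hΔ₀
  refine ⟨?_, by norm_num [Prod.ext_iff], ?_⟩
  · apply convexHull_min _ (convex_Icc _ _)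
    intro x hx
    simp only [Set.mem_insert_iff, Set.mem_singleton_iff] at hx
    rcases hx with rfl | rfl | rfl <;>
      simp [Set.mem_Icc, Prod.le_def] <;> norm_num
  · rintro ⟨x, y⟩ hxy
    simp only [Set.mem_Icc, Prod.le_def] at hxy
    obtain ⟨⟨hx1, hy1⟩, hx2, hy2⟩ := hxy
    rw [Set.mem_smul_set_iff_inv_smul_mem₀ (by norm_num : (5/2 : ℝ) ≠ 0)]
    have key := combo3_mem_convexHull_s3
      (p := ((1 : ℝ), (1 / 2 : ℝ))) (q := (-1, 1/2)) (r := (0, -1))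
      (a := 1/3 + 2*y/15 + x/5) (b := 1/3 + 2*y/15 - x/5) (c := 1/3 - 4*y/15)
      (by linarith) (by linarith) (by linarith) (by ring)
    convert key using 1
    simp [Prod.ext_iff, Prod.smul_def, smul_eq_mul]
    constructor <;> ring
end

section
/- Let S = [-1,1] × [-1,1] ⊆ ℝ² and let Δ = conv{(1, 1/5), (-4/5, 4/5), (-1/5, -1)}. Then Δ ⊆ S, the centroid of Δ is the origin, and S ⊆ (5/2)·Δ. -/
open Pointwise

private lemma mem3 {A B C : ℝ × ℝ} (a b c : ℝ) (ha : 0 ≤ a) (hb : 0 ≤ b) (hc : 0 ≤ c)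
    (h : a + b + c = 1) :
    a • A + b • B + c • C ∈ convexHull ℝ ({A, B, C} : Set (ℝ × ℝ)) := by
  have hconv := convex_convexHull ℝ ({A, B, C} : Set (ℝ × ℝ))
  have hmem := hconv.sum_mem (t := (Finset.univ : Finset (Fin 3))) (w := ![a, b, c])
    (z := ![A, B, C]) ?_ ?_ ?_
  · simpa [Fin.sum_univ_three] using hmem
  · intro i _; fin_cases i <;> simpa
  · simp [Fin.sum_univ_three, h]
  · intro i _
    fin_cases i <;> exact subset_convexHull _ _ (by simp)

theorem second_extreme_triangle_in_square
    (S : Set (ℝ × ℝ)) (hS : S = Set.Icc ((-1, -1) : ℝ × ℝ) (1, 1))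
    (Δ : Set (ℝ × ℝ))
    (hΔ : Δ = convexHull ℝ {((1 : ℝ), (1 / 5 : ℝ)), (-4 / 5, 4 / 5), (-1 / 5, -1)}) :
    Δ ⊆ S ∧
    ((1 : ℝ), (1 / 5 : ℝ)) + (-4 / 5, 4 / 5) + (-1 / 5, -1) = (0, 0) ∧
    S ⊆ (5 / 2 : ℝ) • Δ := by
  subst hS hΔ
  refine ⟨?_, by norm_num [Prod.ext_iff], ?_⟩
  · apply convexHull_min _ (convex_Icc _ _)
    intro x hx
    simp only [Set.mem_insert_iff, Set.mem_singleton_iff] at hx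
    rcases hx with h | h | h <;> subst h <;>
      simp [Set.mem_Icc, Prod.le_def] <;> norm_num
  · -- S = convexHull of the four corners
    have hcorners : Set.Icc ((-1, -1) : ℝ × ℝ) (1, 1) ⊆
        convexHull ℝ ({(-1, -1), (-1, 1), (1, -1), (1, 1)} : Set (ℝ × ℝ)) := by
      have h1 : Set.Icc ((-1, -1) : ℝ × ℝ) (1, 1) = Set.Icc (-1 : ℝ) 1 ×ˢ Set.Icc (-1 : ℝ) 1 :=
        Set.Icc_prod_eq _ _
      have h2 : Set.Icc (-1 : ℝ) 1 = convexHull ℝ ({-1, 1} : Set ℝ) := by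
        rw [convexHull_pair, segment_eq_Icc (by norm_num)]
      have h3 : ({-1, 1} : Set ℝ) ×ˢ ({-1, 1} : Set ℝ) =
          ({(-1, -1), (-1, 1), (1, -1), (1, 1)} : Set (ℝ × ℝ)) := by
        ext p
        simp [Set.mem_prod, Prod.ext_iff]
        tauto
      rw [h1, h2, ← h3, ← convexHull_prod]
    refine hcorners.trans (convexHull_min ?_ ((convex_convexHull ℝ _).smul _))
    have h52 : (5 / 2 : ℝ) ≠ 0 := by norm_num
    intro x hx
    rw [Set.mem_smul_set_iff_inv_smul_mem₀ h52]
    simp only [Set.mem_insert_iff, Set.mem_singleton_iff] at hx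
    rcases hx with h | h | h | h <;> subst h
    · -- (-1,-1) : 1/3 B + 2/3 C
      have : ((5 / 2 : ℝ)⁻¹) • ((-1, -1) : ℝ × ℝ) =
          (0 : ℝ) • ((1 : ℝ), (1 / 5 : ℝ)) + (1 / 3 : ℝ) • ((-4 / 5 : ℝ), (4 / 5 : ℝ)) +
          (2 / 3 : ℝ) • ((-1 / 5 : ℝ), (-1 : ℝ)) := by
        norm_num [Prod.ext_iff]
      rw [this]
      exact mem3 _ _ _ (by norm_num) (by norm_num) (by norm_num) (by norm_num)
    · -- (-1,1) : 1/6 A + 2/3 B + 1/6 C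
      have : ((5 / 2 : ℝ)⁻¹) • ((-1, 1) : ℝ × ℝ) =
          (1 / 6 : ℝ) • ((1 : ℝ), (1 / 5 : ℝ)) + (2 / 3 : ℝ) • ((-4 / 5 : ℝ), (4 / 5 : ℝ)) +
          (1 / 6 : ℝ) • ((-1 / 5 : ℝ), (-1 : ℝ)) := by
        norm_num [Prod.ext_iff]
      rw [this]
      exact mem3 _ _ _ (by norm_num) (by norm_num) (by norm_num) (by norm_num)
    · -- (1,-1) : 1/2 A + 1/2 C
      have : ((5 / 2 : ℝ)⁻¹) • ((1, -1) : ℝ × ℝ) =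
          (1 / 2 : ℝ) • ((1 : ℝ), (1 / 5 : ℝ)) + (0 : ℝ) • ((-4 / 5 : ℝ), (4 / 5 : ℝ)) +
          (1 / 2 : ℝ) • ((-1 / 5 : ℝ), (-1 : ℝ)) := by
        norm_num [Prod.ext_iff]
      rw [this]
      exact mem3 _ _ _ (by norm_num) (by norm_num) (by norm_num) (by norm_num)
    · -- (1,1) : 2/3 A + 1/3 B
      have : ((5 / 2 : ℝ)⁻¹) • ((1, 1) : ℝ × ℝ) =
          (2 / 3 : ℝ) • ((1 : ℝ), (1 / 5 : ℝ)) + (1 / 3 : ℝ) • ((-4 / 5 : ℝ), (4 / 5 : ℝ)) +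
          (0 : ℝ) • ((-1 / 5 : ℝ), (-1 : ℝ)) := by
        norm_num [Prod.ext_iff]
      rw [this]
      exact mem3 _ _ _ (by norm_num) (by norm_num) (by norm_num) (by norm_num)
end

section
/- Let S = [-1,1] × [-1,1] ⊆ ℝ². For every α ∈ (0,1] and every β ∈ [-α, 1-α], the triangle Δ = conv{(1, α), (-1, β), (0, -α-β)} satisfies: Δ ⊆ S, the centroid of Δ is the origin, and the interior of (5/2)·Δ does not contain S. -/
open Pointwise

lemma halfspace_not_interior (A : Set (ℝ × ℝ)) (k C : ℝ)
    (hA : ∀ q ∈ A, k * q.1 - q.2 ≤ C) (p : ℝ × ℝ) (hp : C ≤ k * p.1 - p.2) :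
    p ∉ interior A := by
  intro h
  rw [mem_interior_iff_mem_nhds, Metric.mem_nhds_iff] at h
  obtain ⟨ε, hε, hball⟩ := h
  set p' : ℝ × ℝ := (p.1, p.2 - ε / 2) with hp'
  have hmem : p' ∈ A := by
    apply hball
    rw [Metric.mem_ball]
    have : dist p' p = ε / 2 := by
      rw [Prod.dist_eq]
      simp [hp', Real.dist_eq, abs_of_pos, hε, abs_of_nonneg (by positivity : (0:ℝ) ≤ ε/2)]
      positivity
    rw [this]; linarith
  have := hA p' hmem
  simp only [hp'] at this
  linarith

theorem subcase_one_one
    (S : Set (ℝ × ℝ)) (hS : S = Set.Icc ((-1, -1) : ℝ × ℝ) (1, 1))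
    (α β : ℝ) (hα : α ∈ Set.Ioc (0 : ℝ) 1) (hβ : β ∈ Set.Icc (-α) (1 - α))
    (Δ : Set (ℝ × ℝ))
    (hΔ : Δ = convexHull ℝ {((1 : ℝ), α), (-1, β), (0, -α - β)}) :
    Δ ⊆ S ∧
    ((1 : ℝ), α) + (-1, β) + (0, -α - β) = (0, 0) ∧
    ¬ S ⊆ interior ((5 / 2 : ℝ) • Δ) := by
  obtain ⟨hα0, hα1⟩ := hα
  obtain ⟨hβ1, hβ2⟩ := hβ
  have hsum : (0:ℝ) ≤ α + β := by linarith
  refine ⟨?_, ?_, ?_⟩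
  · rw [hΔ, hS]
    apply convexHull_min _ (convex_Icc _ _)
    intro x hx
    simp only [Set.mem_insert_iff, Set.mem_singleton_iff] at hx
    rcases hx with rfl | rfl | rfl <;>
      simp [Set.mem_Icc, Prod.le_def] <;> constructorm* _ ∧ _ <;> linarith
  · simp [Prod.ext_iff]
  · -- find a linear functional and a corner of S
    have key : ∀ k : ℝ, (k * 1 - α ≤ α + β) → (k * (-1) - β ≤ α + β) →
        ∀ q ∈ (5 / 2 : ℝ) • Δ, k * q.1 - q.2 ≤ 5 / 2 * (α + β) := by
      intro k h1 h2 q hq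
      obtain ⟨y, hy, rfl⟩ := hq
      have hhalf : Δ ⊆ {q : ℝ × ℝ | k * q.1 - q.2 ≤ α + β} := by
        rw [hΔ]
        apply convexHull_min _ ?_
        · intro x hx
          simp only [Set.mem_insert_iff, Set.mem_singleton_iff] at hx
          rcases hx with rfl | rfl | rfl <;> simp only [Set.mem_setOf_eq] <;> linarith
        · apply convex_halfSpace_le (f := fun q : ℝ × ℝ => k * q.1 - q.2)
          constructor <;> intros <;> simp [Prod.fst_add, Prod.snd_add, smul_eq_mul] <;> ring
      have hy' := hhalf hy
      simp only [Set.mem_setOf_eq] at hy'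
      simp only [Prod.smul_fst, Prod.smul_snd, smul_eq_mul]
      nlinarith
    intro hsub
    by_cases hc : α + 3 * β ≤ 2
    · -- corner (1, -1), functional with k = 2α + β
      have hpS : ((1:ℝ), (-1:ℝ)) ∈ S := by
        rw [hS]; simp [Set.mem_Icc, Prod.le_def]
      exact halfspace_not_interior _ (2*α + β) (5/2*(α+β))
        (key (2*α+β) (by linarith) (by linarith)) _ (by simp; linarith) (hsub hpS)
    · -- corner (-1, -1), functional with k = -(α + 2β)
      have hc2 : 3 * α + β ≤ 2 := by linarith
      have hpS : ((-1:ℝ), (-1:ℝ)) ∈ S := by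
        rw [hS]; simp [Set.mem_Icc, Prod.le_def]
      exact halfspace_not_interior _ (-(α + 2*β)) (5/2*(α+β))
        (key (-(α+2*β)) (by linarith) (by linarith)) _ (by simp; linarith) (hsub hpS)
end

section
/- Let S = [-1,1] × [-1,1] ⊆ ℝ². For every α ∈ (0,1] and every γ ∈ [-1, 0], the triangle Δ = conv{(1, α), (-1-γ, 1-α), (γ, -1)} satisfies: Δ ⊆ S, the centroid of Δ is the origin, and the interior of (5/2)·Δ does not contain S. -/
open Pointwise

lemma hs_convex (u v r : ℝ) : Convex ℝ {x : ℝ × ℝ | u * x.1 + v * x.2 ≤ r} := by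
  intro x hx y hy a b ha hb hab
  simp only [Set.mem_setOf_eq] at *
  have : (a • x + b • y).1 = a * x.1 + b * y.1 := rfl
  have h2 : (a • x + b • y).2 = a * x.2 + b * y.2 := rfl
  rw [this, h2]
  have habr : a * r + b * r = r := by rw [← add_mul, hab, one_mul]
  nlinarith [mul_le_mul_of_nonneg_left hx ha, mul_le_mul_of_nonneg_left hy hb]

lemma key (u v : ℝ) (huv : u ≠ 0 ∨ v ≠ 0) (Δ : Set (ℝ × ℝ)) (A B C : ℝ × ℝ)
    (hΔ : Δ = convexHull ℝ {A, B, C}) (r : ℝ)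
    (hA : u * A.1 + v * A.2 ≤ r) (hB : u * B.1 + v * B.2 ≤ r)
    (hC : u * C.1 + v * C.2 ≤ r)
    (p : ℝ × ℝ) (hp : 5 / 2 * r ≤ u * p.1 + v * p.2) :
    p ∉ interior ((5 / 2 : ℝ) • Δ) := by
  intro hmem
  -- Δ ⊆ halfspace
  have hhalf : Δ ⊆ {x : ℝ × ℝ | u * x.1 + v * x.2 ≤ r} := by
    rw [hΔ]
    apply convexHull_min _ (hs_convex u v r)
    intro x hx
    simp only [Set.mem_insert_iff, Set.mem_singleton_iff] at hx
    rcases hx with rfl | rfl | rfl <;> assumption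
  have hT : ∀ x ∈ (5 / 2 : ℝ) • Δ, u * x.1 + v * x.2 ≤ 5 / 2 * r := by
    rintro x ⟨y, hy, rfl⟩
    have := hhalf hy
    simp only [Set.mem_setOf_eq] at this
    have h1 : ((5 / 2 : ℝ) • y).1 = 5 / 2 * y.1 := rfl
    have h2 : ((5 / 2 : ℝ) • y).2 = 5 / 2 * y.2 := rfl
    rw [h1, h2]; nlinarith
  -- interior argument
  have hopen := isOpen_interior (s := (5 / 2 : ℝ) • Δ)
  obtain ⟨ε, hε, hball⟩ := Metric.isOpen_iff.1 hopen p hmem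
  have hn : 0 < |u| + |v| := by
    rcases huv with h | h
    · have := abs_pos.2 h; positivity
    · have := abs_pos.2 h; positivity
  set t : ℝ := ε / (2 * (|u| + |v|)) with ht
  have htpos : 0 < t := by positivity
  set q : ℝ × ℝ := (p.1 + t * u, p.2 + t * v) with hq
  have hqball : q ∈ Metric.ball p ε := by
    rw [Metric.mem_ball, Prod.dist_eq]
    have d1 : dist q.1 p.1 = |t| * |u| := by
      simp [hq, Real.dist_eq, abs_mul]
    have d2 : dist q.2 p.2 = |t| * |v| := by
      simp [hq, Real.dist_eq, abs_mul]
    rw [d1, d2, abs_of_pos htpos]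
    have h1 : t * |u| ≤ t * (|u| + |v|) := by nlinarith [abs_nonneg u, abs_nonneg v]
    have h2 : t * |v| ≤ t * (|u| + |v|) := by nlinarith [abs_nonneg u, abs_nonneg v]
    have h3 : t * (|u| + |v|) = ε / 2 := by
      rw [ht]; field_simp
    have : max (t * |u|) (t * |v|) ≤ ε / 2 := by
      rw [max_le_iff]; constructor <;> linarith
    linarith
  have hqmem : q ∈ (5 / 2 : ℝ) • Δ := interior_subset (hball hqball)
  have := hT q hqmem
  have husq : 0 < u ^ 2 + v ^ 2 := by
    rcases huv with h | h
    · positivity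
    · positivity
  simp only [hq] at this
  nlinarith

theorem subcase_two_one
    (S : Set (ℝ × ℝ)) (hS : S = Set.Icc ((-1, -1) : ℝ × ℝ) (1, 1))
    (α γ : ℝ) (hα : α ∈ Set.Ioc (0 : ℝ) 1) (hγ : γ ∈ Set.Icc (-1 : ℝ) 0)
    (Δ : Set (ℝ × ℝ))
    (hΔ : Δ = convexHull ℝ {((1 : ℝ), α), (-1 - γ, 1 - α), (γ, -1)}) :
    Δ ⊆ S ∧
    ((1 : ℝ), α) + (-1 - γ, 1 - α) + (γ, -1) = (0, 0) ∧
    ¬ S ⊆ interior ((5 / 2 : ℝ) • Δ) := by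
  obtain ⟨hα0, hα1⟩ := hα
  obtain ⟨hγ0, hγ1⟩ := hγ
  refine ⟨?_, ?_, ?_⟩
  · rw [hΔ, hS]
    apply convexHull_min _ (convex_Icc _ _)
    intro x hx
    simp only [Set.mem_insert_iff, Set.mem_singleton_iff] at hx
    rcases hx with rfl | rfl | rfl <;>
      · constructor <;> constructor <;> simp <;> linarith
  · ext <;> simp <;> ring
  · intro hsub
    by_cases h1 : 1 / 2 ≤ α - γ - 5 / 2 * (α * γ)
    · -- p = (1, -1), f = (1+α)x + (γ-1)y
      have hpS : ((1 : ℝ), (-1 : ℝ)) ∈ S := by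
        rw [hS]; constructor <;> constructor <;> simp
      refine key (1 + α) (γ - 1) (Or.inl (by linarith)) Δ _ _ _ hΔ (1 + α * γ)
        (by dsimp; nlinarith) (by dsimp; nlinarith) (by dsimp; nlinarith)
        (1, -1) (by dsimp; nlinarith) (hsub hpS)
    · by_cases h2 : 2 * α - γ + 5 / 2 * (α * γ) ≤ 1 / 2
      · -- p = (1, 1), f = (1-2α)x + (2+γ)y
        have hpS : ((1 : ℝ), (1 : ℝ)) ∈ S := by
          rw [hS]; constructor <;> constructor <;> simp
        refine key (1 - 2 * α) (2 + γ) (Or.inr (by linarith)) Δ _ _ _ hΔ (1 + α * γ)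
          (by dsimp; nlinarith) (by dsimp; nlinarith) (by dsimp; nlinarith)
          (1, 1) (by dsimp; nlinarith) (hsub hpS)
      · -- p = (-1, -1), f = (α-2)x + (-2γ-1)y
        have h3 : α - 2 * γ + 5 / 2 * (α * γ) ≤ 1 / 2 := by
          nlinarith [mul_pos hα0 (by nlinarith : (0:ℝ) < 1 - 5 * (-γ)), sq_nonneg (α + γ), sq_nonneg (α - γ), mul_nonneg hα0.le (neg_nonneg.2 hγ1)]
        have hpS : ((-1 : ℝ), (-1 : ℝ)) ∈ S := by
          rw [hS]; constructor <;> constructor <;> simp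
        refine key (α - 2) (-2 * γ - 1) (Or.inl (by linarith)) Δ _ _ _ hΔ (1 + α * γ)
          (by dsimp; nlinarith) (by dsimp; nlinarith) (by dsimp; nlinarith)
          (-1, -1) (by dsimp; nlinarith) (hsub hpS)
end

section
/- Let S = [-1,1] × [-1,1] ⊆ ℝ². For every t ∈ [-1, 0], the triangle Δ = conv{(1, 0), (t, 1), (-1-t, -1)} satisfies: Δ ⊆ S, the centroid of Δ is the origin, and the interior of (5/2)·Δ does not contain S. -/
open Pointwise

lemma halfplane_aux (a b c : ℝ) (ha : a ≠ 0) (T : Set (ℝ × ℝ))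
    (hT : T ⊆ {x : ℝ × ℝ | a * x.1 + b * x.2 ≤ c}) (p : ℝ × ℝ)
    (hp : c ≤ a * p.1 + b * p.2) : p ∉ interior T := by
  set f : (ℝ × ℝ) →L[ℝ] ℝ :=
    a • (ContinuousLinearMap.fst ℝ ℝ ℝ) + b • (ContinuousLinearMap.snd ℝ ℝ ℝ) with hfdef
  have hf : ∀ x : ℝ × ℝ, f x = a * x.1 + b * x.2 := by
    intro x; simp [hfdef, smul_eq_mul]
  have hsurj : Function.Surjective f := by
    intro r; exact ⟨(r / a, 0), by rw [hf]; field_simp; simp⟩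
  intro hmem
  have h1 : interior T ⊆ interior (f ⁻¹' Set.Iic c) := by
    apply interior_mono; intro x hx; simpa [hf] using hT hx
  have h2 : interior (f ⁻¹' Set.Iic c) = f ⁻¹' Set.Iio c := by
    rw [f.interior_preimage hsurj, interior_Iic]
  have := h1 hmem
  rw [h2] at this
  simp only [Set.mem_preimage, Set.mem_Iio, hf] at this
  linarith

theorem subcase_one_two
    (S : Set (ℝ × ℝ)) (hS : S = Set.Icc ((-1, -1) : ℝ × ℝ) (1, 1))
    (t : ℝ) (ht : t ∈ Set.Icc (-1 : ℝ) 0)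
    (Δ : Set (ℝ × ℝ))
    (hΔ : Δ = convexHull ℝ {((1 : ℝ), (0 : ℝ)), (t, 1), (-1 - t, -1)}) :
    Δ ⊆ S ∧
    ((1 : ℝ), (0 : ℝ)) + (t, 1) + (-1 - t, -1) = (0, 0) ∧
    ¬ S ⊆ interior ((5 / 2 : ℝ) • Δ) := by
  obtain ⟨ht1, ht2⟩ := ht
  have hconvS : Convex ℝ S := by rw [hS]; exact convex_Icc _ _
  have hsub : Δ ⊆ S := by
    rw [hΔ]
    apply convexHull_min _ hconvS
    intro x hx
    simp only [Set.mem_insert_iff, Set.mem_singleton_iff] at hx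
    rcases hx with rfl | rfl | rfl <;>
      · rw [hS]; constructor <;> constructor <;> simp <;> linarith
  refine ⟨hsub, by norm_num [Prod.ext_iff], ?_⟩
  intro hsubS
  -- half-plane bound on Δ
  by_cases hc : t ≤ -1/2
  · -- functional x + (1 - t) y ≤ 1 on Δ, p = (1,1)
    have hΔhalf : Δ ⊆ {x : ℝ × ℝ | 1 * x.1 + (1 - t) * x.2 ≤ 1} := by
      rw [hΔ]
      apply convexHull_min _ (convex_halfSpace_le (by
        constructor <;> intros <;> simp <;> ring) 1)
      intro x hx
      simp only [Set.mem_insert_iff, Set.mem_singleton_iff] at hx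
      rcases hx with rfl | rfl | rfl <;> simp <;> nlinarith
    have hThalf : (5 / 2 : ℝ) • Δ ⊆ {x : ℝ × ℝ | 1 * x.1 + (1 - t) * x.2 ≤ 5/2} := by
      rintro z ⟨x, hx, rfl⟩
      have := hΔhalf hx
      simp only [Set.mem_setOf_eq] at this ⊢
      simp only [Prod.smul_fst, Prod.smul_snd, smul_eq_mul]
      nlinarith
    have hp : ((1 : ℝ), (1 : ℝ)) ∈ S := by rw [hS]; constructor <;> constructor <;> norm_num
    exact halfplane_aux 1 (1 - t) (5/2) one_ne_zero _ hThalf (1, 1) (by norm_num; linarith)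
      (hsubS hp)
  · push_neg at hc
    -- functional x - (2 + t) y ≤ 1 on Δ, p = (1,-1)
    have hΔhalf : Δ ⊆ {x : ℝ × ℝ | 1 * x.1 + (-(2 + t)) * x.2 ≤ 1} := by
      rw [hΔ]
      apply convexHull_min _ (convex_halfSpace_le (by
        constructor <;> intros <;> simp <;> ring) 1)
      intro x hx
      simp only [Set.mem_insert_iff, Set.mem_singleton_iff] at hx
      rcases hx with rfl | rfl | rfl <;> simp <;> nlinarith
    have hThalf : (5 / 2 : ℝ) • Δ ⊆ {x : ℝ × ℝ | 1 * x.1 + (-(2 + t)) * x.2 ≤ 5/2} := by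
      rintro z ⟨x, hx, rfl⟩
      have := hΔhalf hx
      simp only [Set.mem_setOf_eq] at this ⊢
      simp only [Prod.smul_fst, Prod.smul_snd, smul_eq_mul]
      nlinarith
    have hp : ((1 : ℝ), (-1 : ℝ)) ∈ S := by rw [hS]; constructor <;> constructor <;> norm_num
    exact halfplane_aux 1 (-(2 + t)) (5/2) one_ne_zero _ hThalf (1, -1) (by norm_num; linarith)
      (hsubS hp)
end

section
/- Let M ⊆ ℝ² be a convex compact set with nonempty interior that is centrally symmetric about the origin (M = -M). If a, b, c are points on the boundary of M with a + b + c = 0, then M ⊆ 3·conv{a,b,c}. -/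
open Pointwise

private lemma aux_convex3 {M : Set (ℝ × ℝ)} (h : Convex ℝ M) {p q r : ℝ × ℝ}
    (hp : p ∈ M) (hq : q ∈ M) (hr : r ∈ M)
    {u v w : ℝ} (hu : 0 ≤ u) (hv : 0 ≤ v) (hw : 0 ≤ w) (huvw : u + v + w = 1) :
    u • p + v • q + w • r ∈ M := by
  have := h.sum_mem (t := (Finset.univ : Finset (Fin 3))) (w := ![u, v, w]) (z := ![p, q, r])
    (by intro i _; fin_cases i <;> simpa) (by simp [Fin.sum_univ_three]; linarith)
    (by intro i _; fin_cases i <;> simpa)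
  simpa [Fin.sum_univ_three] using this

private lemma aux_zero_mem {M : Set (ℝ × ℝ)} (hconv : Convex ℝ M)
    (hint : (interior M).Nonempty) (hsymm : M = -M) : (0 : ℝ × ℝ) ∈ interior M := by
  obtain ⟨y, hy⟩ := hint
  have hy' : -y ∈ interior M := by
    rw [hsymm, show (-M : Set (ℝ×ℝ)) = (Homeomorph.neg (ℝ×ℝ)) ⁻¹' M from rfl,
      ← Homeomorph.preimage_interior]
    simpa using hy
  have := hconv.interior hy hy' (by norm_num : (0:ℝ) ≤ 1/2) (by norm_num : (0:ℝ) ≤ 1/2)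
    (by norm_num)
  convert this using 1
  module

private lemma aux_subconvex {M : Set (ℝ × ℝ)} (hconv : Convex ℝ M)
    (h0 : (0 : ℝ × ℝ) ∈ interior M)
    {w₁ w₂ w₃ : ℝ × ℝ} (h1 : w₁ ∈ M) (h2 : w₂ ∈ M) (h3 : w₃ ∈ M)
    {l₁ l₂ l₃ : ℝ} (hl1 : 0 ≤ l₁) (hl2 : 0 ≤ l₂) (hl3 : 0 ≤ l₃)
    (hs : l₁ + l₂ + l₃ < 1) :
    l₁ • w₁ + l₂ • w₂ + l₃ • w₃ ∈ interior M := by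
  rcases eq_or_lt_of_le (show (0:ℝ) ≤ l₁ + l₂ + l₃ by positivity) with h | h
  · have e1 : l₁ = 0 := by linarith
    have e2 : l₂ = 0 := by linarith
    have e3 : l₃ = 0 := by linarith
    simpa [e1, e2, e3] using h0
  · set s := l₁ + l₂ + l₃ with hsdef
    have hs0 : s ≠ 0 := ne_of_gt h
    have hy : (l₁/s) • w₁ + (l₂/s) • w₂ + (l₃/s) • w₃ ∈ M :=
      aux_convex3 hconv h1 h2 h3 (by positivity) (by positivity) (by positivity)
        (by field_simp; exact hsdef.symm)
    have hcombo := hconv.combo_interior_self_mem_interior h0 hy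
      (show (0:ℝ) < 1 - s by linarith) (le_of_lt h) (by ring)
    have e : (1 - s) • (0 : ℝ × ℝ) + s • ((l₁/s) • w₁ + (l₂/s) • w₂ + (l₃/s) • w₃)
        = l₁ • w₁ + l₂ • w₂ + l₃ • w₃ := by
      match_scalars <;> field_simp
    rwa [e] at hcombo

private lemma aux_frontier {M : Set (ℝ × ℝ)} (hcomp : IsCompact M) {p : ℝ × ℝ}
    (hp : p ∈ frontier M) : p ∈ M ∧ p ∉ interior M := by
  rw [frontier, hcomp.isClosed.closure_eq] at hp
  exact hp

private lemma aux_negmem {M : Set (ℝ × ℝ)} (hsymm : M = -M) {p : ℝ × ℝ} (hp : p ∈ M) :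
    -p ∈ M := by
  rw [hsymm]
  exact Set.neg_mem_neg.mpr hp

/-- Key half : with the ordering assumption γ ≤ β, the `a`-coordinate is at most 4/3. -/
private lemma key_aux (M : Set (ℝ × ℝ)) (hconv : Convex ℝ M) (hcomp : IsCompact M)
    (h0 : (0 : ℝ × ℝ) ∈ interior M) (hsymm : M = -M)
    (a b c : ℝ × ℝ) (ha : a ∈ frontier M) (hb : b ∈ frontier M) (hc : c ∈ frontier M)
    (hsum : a + b + c = 0)
    (α β γ : ℝ) (habc : α + β + γ = 1) (hγβ : γ ≤ β)
    (hx : α • a + β • b + γ • c ∈ M) : α ≤ 4/3 := by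
  by_contra hcon
  push_neg at hcon
  obtain ⟨haM, haI⟩ := aux_frontier hcomp ha
  obtain ⟨hbM, hbI⟩ := aux_frontier hcomp hb
  obtain ⟨hcM, hcI⟩ := aux_frontier hcomp hc
  have h0M : (0 : ℝ × ℝ) ∈ M := interior_subset h0
  have hγ : γ = 1 - α - β := by linarith
  set A : ℝ := 2*α + β - 1 with hAdef
  set B : ℝ := α + 2*β - 1 with hBdef
  have hβhalf : (1 - α)/2 ≤ β := by linarith
  have hA32 : (3:ℝ)/2 < A := by rw [hAdef]; linarith
  have hA0 : (0:ℝ) < A := by linarith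
  have hB0 : (0:ℝ) ≤ B := by rw [hBdef]; linarith
  have hAB : A • a + B • b = α • a + β • b + γ • c := by
    rw [hγ, hAdef, hBdef]
    linear_combination (norm := module) (α + β - 1 : ℝ) • hsum
  have hxM : A • a + B • b ∈ M := by rw [hAB]; exact hx
  by_cases hB1 : B ≤ 1
  · -- a is in the interior : a = (1/A)•x' + (B/A)•(-b)
    have hsumlt : 1/A + B/A + 0 < 1 := by
      rw [add_zero, ← add_div, div_lt_one hA0]
      linarith
    have hmem := aux_subconvex hconv h0 hxM (aux_negmem hsymm hbM) h0M
      (div_nonneg zero_le_one hA0.le) (div_nonneg hB0 hA0.le) le_rfl hsumlt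
    have e : (1/A) • (A • a + B • b) + (B/A) • (-b) + (0:ℝ) • (0 : ℝ × ℝ) = a := by
      match_scalars <;> field_simp <;> ring
    rw [e] at hmem
    exact haI hmem
  · -- c is in the interior
    push_neg at hB1
    set m : ℝ := max A B with hmdef
    have hAm : A ≤ m := le_max_left _ _
    have hBm : B ≤ m := le_max_right _ _
    have hm0 : (0:ℝ) < m := lt_of_lt_of_le hA0 hAm
    have hABm : 1 + m < A + B := by
      rcases max_choice A B with h | h <;> rw [hmdef, h] <;> linarith
    have hsumlt : 1/m + (m - A)/m + (m - B)/m < 1 := by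
      have e : 1/m + (m - A)/m + (m - B)/m = (1 + (m - A) + (m - B))/m := by ring
      rw [e, div_lt_one hm0]
      linarith
    have hmem := aux_subconvex hconv h0 (aux_negmem hsymm hxM) (aux_negmem hsymm haM)
      (aux_negmem hsymm hbM) (div_nonneg zero_le_one hm0.le)
      (show (0:ℝ) ≤ (m - A)/m from div_nonneg (by linarith) hm0.le)
      (show (0:ℝ) ≤ (m - B)/m from div_nonneg (by linarith) hm0.le) hsumlt
    have hc' : c = -a - b := by linear_combination (norm := module) hsum
    have e : (1/m) • (-(A • a + B • b)) + ((m - A)/m) • (-a) + ((m - B)/m) • (-b) = c := by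
      rw [hc']
      match_scalars <;> field_simp <;> ring
    rw [e] at hmem
    exact hcI hmem

/-- Key lemma : the `a`-coordinate of any point of `M` is at most 4/3. -/
private lemma key_s9 (M : Set (ℝ × ℝ)) (hconv : Convex ℝ M) (hcomp : IsCompact M)
    (h0 : (0 : ℝ × ℝ) ∈ interior M) (hsymm : M = -M)
    (a b c : ℝ × ℝ) (ha : a ∈ frontier M) (hb : b ∈ frontier M) (hc : c ∈ frontier M)
    (hsum : a + b + c = 0)
    (α β γ : ℝ) (habc : α + β + γ = 1)
    (hx : α • a + β • b + γ • c ∈ M) : α ≤ 4/3 := by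
  rcases le_total γ β with h | h
  · exact key_aux M hconv hcomp h0 hsymm a b c ha hb hc hsum α β γ habc h hx
  · refine key_aux M hconv hcomp h0 hsymm a c b ha hc hb
      (by linear_combination (norm := module) hsum) α γ β (by linarith) h ?_
    have e : α • a + γ • c + β • b = α • a + β • b + γ • c := by module
    rw [e]; exact hx

theorem inscribed_triangle_in_symmetric_body
    (M : Set (ℝ × ℝ)) (hconv : Convex ℝ M) (hcomp : IsCompact M)
    (hint : (interior M).Nonempty) (hsymm : M = -M)
    (a b c : ℝ × ℝ) (ha : a ∈ frontier M) (hb : b ∈ frontier M) (hc : c ∈ frontier M)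
    (hsum : a + b + c = 0) :
    M ⊆ (3 : ℝ) • convexHull ℝ {a, b, c} := by
  have h0 : (0 : ℝ × ℝ) ∈ interior M := aux_zero_mem hconv hint hsymm
  obtain ⟨haM, haI⟩ := aux_frontier hcomp ha
  obtain ⟨hbM, hbI⟩ := aux_frontier hcomp hb
  obtain ⟨hcM, hcI⟩ := aux_frontier hcomp hc
  have h0M : (0 : ℝ × ℝ) ∈ M := interior_subset h0
  -- nondegeneracy : a and b are linearly independent
  have hd : a.1 * b.2 - a.2 * b.1 ≠ 0 := by
    intro hd
    have ha0 : a ≠ 0 := fun h => haI (h ▸ h0)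
    obtain ⟨r, hr⟩ : ∃ r : ℝ, b = r • a := by
      rcases (show a.1 ≠ 0 ∨ a.2 ≠ 0 by
        by_contra h
        push_neg at h
        exact ha0 (Prod.ext h.1 h.2)) with h | h
      · exact ⟨b.1 / a.1, Prod.ext (by simp only [Prod.smul_fst, smul_eq_mul]; field_simp) (by simp only [Prod.smul_snd, smul_eq_mul]; field_simp; linarith)⟩
      · exact ⟨b.2 / a.2, Prod.ext (by simp only [Prod.smul_fst, smul_eq_mul]; field_simp; linarith) (by simp only [Prod.smul_snd, smul_eq_mul]; field_simp)⟩
    have hcr : c = (-(1 + r)) • a := by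
      have hc' : c = -a - b := by linear_combination (norm := module) hsum
      rw [hc', hr]; module
    -- scaling helper
    have scale : ∀ t s : ℝ, |t| < s → s • a ∈ M → -(s • a) ∈ M → t • a ∈ interior M := by
      intro t s hts hsM hsM'
      have hs0 : (0:ℝ) < s := lt_of_le_of_lt (abs_nonneg t) hts
      rcases le_or_gt 0 t with h | h
      · have hmem := aux_subconvex hconv h0 hsM h0M h0M
          (show (0:ℝ) ≤ t/s from div_nonneg h hs0.le) le_rfl le_rfl
          (by rw [abs_of_nonneg h] at hts
              have : t/s < 1 := (div_lt_one hs0).mpr hts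
              linarith)
        have e : (t/s) • (s • a) + (0:ℝ) • (0:ℝ×ℝ) + (0:ℝ) • (0:ℝ×ℝ) = t • a := by
          match_scalars; field_simp
        rwa [e] at hmem
      · have hmem := aux_subconvex hconv h0 hsM' h0M h0M
          (show (0:ℝ) ≤ -t/s from div_nonneg (by linarith) hs0.le) le_rfl le_rfl
          (by rw [abs_of_neg h] at hts
              have : -t/s < 1 := (div_lt_one hs0).mpr hts
              linarith)
        have e : (-t/s) • (-(s • a)) + (0:ℝ) • (0:ℝ×ℝ) + (0:ℝ) • (0:ℝ×ℝ) = t • a := by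
          match_scalars; field_simp
        rwa [e] at hmem
    set m : ℝ := max 1 (max |r| |1 + r|) with hmdef
    have hmM : m • a ∈ M ∧ -(m • a) ∈ M := by
      have hmain : m • a ∈ M := by
        rcases max_choice 1 (max |r| |1 + r|) with h | h
        · rw [hmdef, h, one_smul]; exact haM
        · rcases max_choice |r| |1 + r| with h2 | h2
          · rw [hmdef, h, h2]
            rcases abs_cases r with ⟨e, _⟩ | ⟨e, _⟩
            · rw [e, ← hr]; exact hbM
            · rw [e, neg_smul, ← hr]; exact aux_negmem hsymm hbM
          · rw [hmdef, h, h2]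
            rcases abs_cases (1 + r) with ⟨e, _⟩ | ⟨e, _⟩
            · rw [e]
              have : (1 + r) • a = -c := by rw [hcr]; module
              rw [this]; exact aux_negmem hsymm hcM
            · rw [e]
              have : (-(1 + r)) • a = c := by rw [hcr]
              rw [this]; exact hcM
      exact ⟨hmain, aux_negmem hsymm hmain⟩
    have notlt : ∀ t : ℝ, t • a ∉ interior M → ¬(|t| < m) :=
      fun t hni htm => hni (scale t m htm hmM.1 hmM.2)
    have h1m : (1:ℝ) ≤ m := le_max_left _ _
    have hm1 : m ≤ 1 := by
      have := notlt 1 (by rw [one_smul]; exact haI)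
      rw [abs_one] at this
      exact not_lt.mp this
    have hrm : |r| = 1 := by
      have h1 : |r| ≤ m := le_trans (le_max_left _ _) (le_max_right _ _)
      have h2 := notlt r (by rw [← hr]; exact hbI)
      have := not_lt.mp h2
      linarith
    have hr1m : |1 + r| = 1 := by
      have h1 : |1 + r| ≤ m := le_trans (le_max_right _ _) (le_max_right _ _)
      have h2 := notlt (-(1 + r)) (by rw [← hcr]; exact hcI)
      rw [abs_neg] at h2
      have := not_lt.mp h2
      linarith
    rcases abs_eq (by norm_num : (0:ℝ) ≤ 1) |>.mp hrm with h | h <;> rw [h] at hr1m <;>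
      norm_num at hr1m
  -- barycentric representation of an arbitrary point of M
  intro x hx
  set d : ℝ := a.1 * b.2 - a.2 * b.1 with hddef
  set A' : ℝ := (x.1 * b.2 - x.2 * b.1) / d with hA'def
  set B' : ℝ := (a.1 * x.2 - a.2 * x.1) / d with hB'def
  have hxrep : x = A' • a + B' • b := by
    have e1 : (A' • a + B' • b).1 = A' * a.1 + B' * b.1 := by simp
    have e2 : (A' • a + B' • b).2 = A' * a.2 + B' * b.2 := by simp
    refine Prod.ext ?_ ?_
    · rw [e1, hA'def, hB'def, div_mul_eq_mul_div, div_mul_eq_mul_div, ← add_div, eq_div_iff hd, hddef]; ring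
    · rw [e2, hA'def, hB'def, div_mul_eq_mul_div, div_mul_eq_mul_div, ← add_div, eq_div_iff hd, hddef]; ring
  set γ₀ : ℝ := (1 - A' - B') / 3 with hγ₀def
  set α₀ : ℝ := A' + γ₀ with hα₀def
  set β₀ : ℝ := B' + γ₀ with hβ₀def
  have hsum1 : α₀ + β₀ + γ₀ = 1 := by rw [hα₀def, hβ₀def, hγ₀def]; ring
  have hrep_eq : α₀ • a + β₀ • b + γ₀ • c = x := by
    rw [hxrep, hα₀def, hβ₀def]
    linear_combination (norm := module) (γ₀ : ℝ) • hsum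
  have hxneg : -x ∈ M := aux_negmem hsymm hx
  -- lower bounds on the barycentric coordinates
  have hα : 2/3 - α₀ ≤ 4/3 := by
    refine key_s9 M hconv hcomp h0 hsymm a b c ha hb hc hsum (2/3 - α₀) (2/3 - β₀) (2/3 - γ₀) (by linarith) ?_
    have e : (2/3 - α₀) • a + (2/3 - β₀) • b + (2/3 - γ₀) • c = -x := by
      linear_combination (norm := module) ((2:ℝ)/3) • hsum - hrep_eq
    rw [e]; exact hxneg
  have hβ : 2/3 - β₀ ≤ 4/3 := by
    refine key_s9 M hconv hcomp h0 hsymm b c a hb hc ha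
      (by linear_combination (norm := module) hsum) (2/3 - β₀) (2/3 - γ₀) (2/3 - α₀)
      (by linarith) ?_
    have e : (2/3 - β₀) • b + (2/3 - γ₀) • c + (2/3 - α₀) • a = -x := by
      linear_combination (norm := module) ((2:ℝ)/3) • hsum - hrep_eq
    rw [e]; exact hxneg
  have hγ : 2/3 - γ₀ ≤ 4/3 := by
    refine key_s9 M hconv hcomp h0 hsymm c a b hc ha hb
      (by linear_combination (norm := module) hsum) (2/3 - γ₀) (2/3 - α₀) (2/3 - β₀)
      (by linarith) ?_
    have e : (2/3 - γ₀) • c + (2/3 - α₀) • a + (2/3 - β₀) • b = -x := by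
      linear_combination (norm := module) ((2:ℝ)/3) • hsum - hrep_eq
    rw [e]; exact hxneg
  -- assemble the convex combination
  rw [Set.mem_smul_set]
  refine ⟨(α₀/3 + 2/9) • a + (β₀/3 + 2/9) • b + (γ₀/3 + 2/9) • c, ?_, ?_⟩
  · refine aux_convex3 (convex_convexHull ℝ _)
      (subset_convexHull ℝ _ (by simp)) (subset_convexHull ℝ _ (by simp))
      (subset_convexHull ℝ _ (by simp)) (by linarith) (by linarith) (by linarith)
      (by linarith)
  · linear_combination (norm := module) ((2:ℝ)/3) • hsum + hrep_eq
end

section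
/- Let S = [-1,1] × [-1,1] ⊆ ℝ² and let Δ = conv{(1,1), (-1,0), (0,-1)}. Then the vertices (1,1), (-1,0), (0,-1) lie on the boundary of S, their sum is (0,0) (so the centroid of Δ is the origin), S ⊆ 3·Δ, and for every λ > 0 with S ⊆ λ·Δ one has λ ≥ 3. -/
open Pointwise

private lemma combo3 {p1 p2 p3 : ℝ × ℝ} {a b c : ℝ} (ha : 0 ≤ a) (hb : 0 ≤ b) (hc : 0 ≤ c)
    (habc : a + b + c = 1) :
    a • p1 + b • p2 + c • p3 ∈ convexHull ℝ ({p1, p2, p3} : Set (ℝ × ℝ)) := by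
  have h1 : p1 ∈ convexHull ℝ ({p1, p2, p3} : Set (ℝ × ℝ)) :=
    subset_convexHull ℝ _ (by simp)
  have h2 : p2 ∈ convexHull ℝ ({p1, p2, p3} : Set (ℝ × ℝ)) :=
    subset_convexHull ℝ _ (by simp)
  have h3 : p3 ∈ convexHull ℝ ({p1, p2, p3} : Set (ℝ × ℝ)) :=
    subset_convexHull ℝ _ (by simp)
  have conv := convex_convexHull ℝ ({p1, p2, p3} : Set (ℝ × ℝ))
  rcases eq_or_lt_of_le (add_nonneg hb hc) with h0 | h0
  · have hb0 : b = 0 := by linarith [ (le_antisymm (by linarith) hb : b = 0)]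
    have hc0 : c = 0 := by linarith
    have ha1 : a = 1 := by linarith
    simp [hb0, hc0, ha1, h1]
  · have hq : (b / (b + c)) • p2 + (c / (b + c)) • p3 ∈
        convexHull ℝ ({p1, p2, p3} : Set (ℝ × ℝ)) :=
      conv h2 h3 (div_nonneg hb h0.le) (div_nonneg hc h0.le) (by field_simp)
    have := conv h1 hq ha h0.le (by linarith)
    convert this using 1
    rw [smul_add, smul_smul, smul_smul]
    field_simp
    module

theorem ratio_three_sharp
    (S : Set (ℝ × ℝ)) (hS : S = Set.Icc ((-1, -1) : ℝ × ℝ) (1, 1))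
    (Δ : Set (ℝ × ℝ))
    (hΔ : Δ = convexHull ℝ {((1 : ℝ), (1 : ℝ)), (-1, 0), (0, -1)}) :
    ((1 : ℝ), (1 : ℝ)) ∈ frontier S ∧ ((-1 : ℝ), (0 : ℝ)) ∈ frontier S ∧
    ((0 : ℝ), (-1 : ℝ)) ∈ frontier S ∧
    ((1 : ℝ), (1 : ℝ)) + (-1, 0) + (0, -1) = (0, 0) ∧
    S ⊆ (3 : ℝ) • Δ ∧
    ∀ lam : ℝ, 0 < lam → S ⊆ lam • Δ → lam ≥ 3 := by
  subst hS hΔ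
  have hint : interior (Set.Icc ((-1, -1) : ℝ × ℝ) (1, 1)) =
      Set.Ioo (-1 : ℝ) 1 ×ˢ Set.Ioo (-1 : ℝ) 1 := by
    rw [← Set.Icc_prod_Icc, interior_prod_eq, interior_Icc]
  have hfr : frontier (Set.Icc ((-1, -1) : ℝ × ℝ) (1, 1)) =
      Set.Icc ((-1, -1) : ℝ × ℝ) (1, 1) \ (Set.Ioo (-1 : ℝ) 1 ×ˢ Set.Ioo (-1 : ℝ) 1) := by
    rw [frontier, IsClosed.closure_eq isClosed_Icc, hint]
  refine ⟨?_, ?_, ?_, by norm_num [Prod.ext_iff], ?_, ?_⟩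
  · rw [hfr]
    refine ⟨by simp [Prod.le_def], by norm_num⟩
  · rw [hfr]
    refine ⟨by simp [Prod.le_def], by norm_num⟩
  · rw [hfr]
    refine ⟨by simp [Prod.le_def], by norm_num⟩
  · -- S ⊆ 3 • Δ
    rintro ⟨x, y⟩ hxy
    simp only [Set.mem_Icc, Prod.le_def] at hxy
    obtain ⟨⟨hx1, hy1⟩, hx2, hy2⟩ := hxy
    have key := combo3 (p1 := ((1 : ℝ), (1 : ℝ))) (p2 := ((-1 : ℝ), (0 : ℝ)))
      (p3 := ((0 : ℝ), (-1 : ℝ))) (a := (3 + x + y) / 9) (b := (3 - 2 * x + y) / 9)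
      (c := (3 + x - 2 * y) / 9) (by linarith) (by linarith) (by linarith) (by ring)
    refine ⟨_, key, ?_⟩
    simp only [Prod.smul_mk, Prod.mk_add_mk, smul_eq_mul, Prod.ext_iff]
    constructor <;> ring
  · -- minimality
    intro lam hlam hsub
    have hmem : ((-1 : ℝ), (1 : ℝ)) ∈ lam • convexHull ℝ
        ({((1 : ℝ), (1 : ℝ)), (-1, 0), (0, -1)} : Set (ℝ × ℝ)) := by
      apply hsub
      simp [Set.mem_Icc, Prod.le_def]
    obtain ⟨q, hq, hqe⟩ := hmem
    have hhalf : convexHull ℝ ({((1 : ℝ), (1 : ℝ)), (-1, 0), (0, -1)} : Set (ℝ × ℝ)) ⊆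
        {p : ℝ × ℝ | -p.1 + 2 * p.2 ≤ 1} := by
      apply convexHull_min
      · rintro p hp
        simp only [Set.mem_insert_iff, Set.mem_singleton_iff] at hp
        rcases hp with rfl | rfl | rfl <;> norm_num
      · intro p hp q hq a b ha hb hab
        simp only [Set.mem_setOf_eq, Prod.fst_add, Prod.snd_add, Prod.smul_fst,
          Prod.smul_snd, smul_eq_mul] at *
        nlinarith [hp, hq]
    have hq' := hhalf hq
    have hq1 : lam * q.1 = -1 := by
      have := congrArg Prod.fst hqe; simpa [Prod.smul_def] using this
    have hq2 : lam * q.2 = 1 := by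
      have := congrArg Prod.snd hqe; simpa [Prod.smul_def] using this
    simp only [Set.mem_setOf_eq] at hq'
    -- -q.1 + 2*q.2 ≤ 1, with q.1 = -1/lam, q.2 = 1/lam : 3/lam ≤ 1
    nlinarith [hq', hq1, hq2, hlam]
end

section
/- Let S = [-1,1] × [-1,1] ⊆ ℝ² and let T₀ = conv{(5/2, 5/4), (-5/2, 5/4), (0, -5/2)}. Then the centroid of T₀ is the origin, S ⊆ T₀, and T₀ ⊆ (5/2)·S. -/
open Pointwise

lemma mem_tri (v1 v2 v3 p : ℝ × ℝ) (a b c : ℝ) (ha : 0 ≤ a) (hb : 0 ≤ b) (hc : 0 ≤ c)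
    (habc : a + b + c = 1) (hp : p = a • v1 + b • v2 + c • v3) :
    p ∈ convexHull ℝ ({v1, v2, v3} : Set (ℝ × ℝ)) := by
  have hv1 : v1 ∈ convexHull ℝ ({v1, v2, v3} : Set (ℝ × ℝ)) :=
    subset_convexHull ℝ _ (by simp)
  have hv2 : v2 ∈ convexHull ℝ ({v1, v2, v3} : Set (ℝ × ℝ)) :=
    subset_convexHull ℝ _ (by simp)
  have hv3 : v3 ∈ convexHull ℝ ({v1, v2, v3} : Set (ℝ × ℝ)) :=
    subset_convexHull ℝ _ (by simp)
  have hconv := convex_convexHull ℝ ({v1, v2, v3} : Set (ℝ × ℝ))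
  rcases eq_or_lt_of_le (by linarith : (0:ℝ) ≤ b + c) with h0 | hpos
  · have hb0 : b = 0 := by linarith
    have hc0 : c = 0 := by linarith
    have ha1 : a = 1 := by linarith
    rw [hp, hb0, hc0, ha1]
    simpa using hv1
  · have hz : (b / (b + c)) • v2 + (c / (b + c)) • v3 ∈
        convexHull ℝ ({v1, v2, v3} : Set (ℝ × ℝ)) := by
      apply hconv hv2 hv3 (div_nonneg hb hpos.le) (div_nonneg hc hpos.le)
      field_simp
    have := hconv hv1 hz ha hpos.le (by linarith)
    convert this using 1
    rw [hp, smul_add, smul_smul, smul_smul]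
    rw [mul_div_cancel₀ _ hpos.ne', mul_div_cancel₀ _ hpos.ne']
    abel

theorem dual_extreme_position
    (S : Set (ℝ × ℝ)) (hS : S = Set.Icc ((-1, -1) : ℝ × ℝ) (1, 1))
    (T₀ : Set (ℝ × ℝ))
    (hT₀ : T₀ = convexHull ℝ {((5 / 2 : ℝ), (5 / 4 : ℝ)), (-5 / 2, 5 / 4), (0, -5 / 2)}) :
    ((5 / 2 : ℝ), (5 / 4 : ℝ)) + (-5 / 2, 5 / 4) + (0, -5 / 2) = (0, 0) ∧
    S ⊆ T₀ ∧
    T₀ ⊆ (5 / 2 : ℝ) • S := by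
  refine ⟨by norm_num [Prod.ext_iff], ?_, ?_⟩
  · -- S ⊆ T₀
    have hSeq : S = convexHull ℝ (({-1, 1} : Set ℝ) ×ˢ ({-1, 1} : Set ℝ)) := by
      rw [convexHull_prod, convexHull_pair,
        segment_eq_Icc (by norm_num : (-1:ℝ) ≤ 1), Set.Icc_prod_Icc, hS]
    rw [hSeq, hT₀]
    apply convexHull_min _ (convex_convexHull ℝ _)
    rintro ⟨x, y⟩ ⟨hx, hy⟩
    simp only [Set.mem_insert_iff, Set.mem_singleton_iff] at hx hy
    rcases hx with rfl | rfl <;> rcases hy with rfl | rfl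
    · exact mem_tri _ _ _ _ 0 (2/5) (3/5) (by norm_num) (by norm_num) (by norm_num)
        (by norm_num) (by norm_num [Prod.ext_iff, Prod.smul_mk])
    · exact mem_tri _ _ _ _ (4/15) (2/3) (1/15) (by norm_num) (by norm_num) (by norm_num)
        (by norm_num) (by norm_num [Prod.ext_iff, Prod.smul_mk])
    · exact mem_tri _ _ _ _ (2/5) 0 (3/5) (by norm_num) (by norm_num) (by norm_num)
        (by norm_num) (by norm_num [Prod.ext_iff, Prod.smul_mk])
    · exact mem_tri _ _ _ _ (2/3) (4/15) (1/15) (by norm_num) (by norm_num) (by norm_num)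
        (by norm_num) (by norm_num [Prod.ext_iff, Prod.smul_mk])
  · -- T₀ ⊆ (5/2) • S
    rw [hT₀]
    apply convexHull_min _ ((hS ▸ convex_Icc _ _).smul _)
    rintro p hp
    simp only [Set.mem_insert_iff, Set.mem_singleton_iff] at hp
    rcases hp with rfl | rfl | rfl
    · exact ⟨(1, 1/2), by rw [hS]; constructor <;> constructor <;> norm_num,
        by norm_num [Prod.ext_iff, Prod.smul_mk]⟩
    · exact ⟨(-1, 1/2), by rw [hS]; constructor <;> constructor <;> norm_num,
        by norm_num [Prod.ext_iff, Prod.smul_mk]⟩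
    · exact ⟨(0, -1), by rw [hS]; constructor <;> constructor <;> norm_num,
        by norm_num [Prod.ext_iff, Prod.smul_mk]⟩
end

section
/- Let p, q, r ∈ ℝ² be affinely independent points with p + q + r = 0, and let T = conv{p,q,r}. Let u, v ∈ ℝ² be linearly independent and let P = {s·u + t·v : s, t ∈ [-1,1]} be the parallelogram with center at the origin spanned by u and v. If P ⊆ T and λ > 0 satisfies T ⊆ λ·P, then λ ≥ 5/2. -/
set_option maxHeartbeats 1000000

theorem red_lemma (m s t b : ℝ) (hm : 2 ≤ m) (hs : 0 ≤ s) (ht : 0 ≤ t) (htm : t ≤ m)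
    (hb : 0 ≤ b) (hbm : b ≤ m) (hsb : s + b ≤ 2*m)
    (h1 : 3*m + t + s - 3*b ≤ m*s + b*t)
    (h3 : 3*m + 3*b + s - t ≤ m*s + b*t)
    (h4 : 2*s + 2*t ≤ m*s + b*t) : 5 ≤ 2*m := by
  nlinarith [mul_nonneg hb (sub_nonneg.2 htm),
             mul_nonneg (sub_nonneg.2 hbm) ht,
             mul_nonneg (sub_nonneg.2 hm) hs, mul_nonneg (sub_nonneg.2 hm) ht,
             mul_nonneg (sub_nonneg.2 hm) hb,
             mul_nonneg (sub_nonneg.2 hsb) hb,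
             mul_nonneg (sub_nonneg.2 hsb) ht,
             mul_nonneg (sub_nonneg.2 hsb) (sub_nonneg.2 htm)]

theorem key_s13 (a1 a2 b1 b2 c1 c2 d : ℝ)
    (s1 : a1 + b1 + c1 = 0) (s2 : a2 + b2 + c2 = 0)
    (hdef : d = a1*b2 - a2*b1)
    (hd : 0 < d)
    (e1 : (b2-a2) + (b1-a1) ≤ d)
    (f2 : (c2-b2) - (c1-b1) ≤ d)
    (g3 : -(a2-c2) + (a1-c1) ≤ d)
    (g4 : -(a2-c2) - (a1-c1) ≤ d)
    (m2 : -a1 ≤ b1) (m4 : -a2 ≤ b1)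
    (m6 : -b2 ≤ b1) (m5 : b2 ≤ b1)
    (m8 : -c1 ≤ b1) (m9 : c2 ≤ b1) :
    5 ≤ 2 * b1 := by
  have hb1 : 0 ≤ b1 := by linarith
  have P2 : 2*d = b1*(c2-a2) - b2*(c1-a1) := by
    linear_combination 2*hdef + b2*s1 - b1*s2
  have hm : 2 ≤ b1 := by
    rcases le_total 0 (c1 - a1) with ht | ht
    · nlinarith [mul_nonneg (by linarith : (0:ℝ) ≤ b1 + b2) ht,
                 mul_nonneg hb1 (by linarith [g4] : (0:ℝ) ≤ d - ((c2-a2) + (c1-a1)))]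
    · nlinarith [mul_nonneg (by linarith : (0:ℝ) ≤ b1 - b2) (by linarith : (0:ℝ) ≤ -(c1-a1)),
                 mul_nonneg hb1 (by linarith [g3] : (0:ℝ) ≤ d - ((c2-a2) - (c1-a1)))]
  rcases le_total 0 (b2 * (c1 - a1)) with hcase | hcase
  · -- easy case: b2*(c1-a1) ≥ 0
    rcases le_total 0 (c2 - a2) with hs | hs
    · nlinarith [hcase,
        mul_nonneg (by linarith : (0:ℝ) ≤ b1 - 1) (by linarith : (0:ℝ) ≤ 2*b1 - (c2 - a2))]
    · -- s ≤ 0 : 2d = b1*s - b2*t ≤ 0 + 0 contradiction-ish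
      nlinarith [hcase, mul_nonpos_iff.2 (Or.inl ⟨hb1, hs⟩)]
  · rcases le_total 0 b2 with hb2 | hb2 <;> rcases le_total 0 (c1 - a1) with ht | ht
    · -- b2 ≥ 0, t ≥ 0 : product ≥ 0, easy
      rcases le_total 0 (c2 - a2) with hs | hs
      · nlinarith [mul_nonneg hb2 ht,
          mul_nonneg (by linarith : (0:ℝ) ≤ b1 - 1) (by linarith : (0:ℝ) ≤ 2*b1 - (c2 - a2))]
      · nlinarith [mul_nonneg hb2 ht, mul_nonpos_iff.2 (Or.inl ⟨hb1, hs⟩)]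
    · -- b2 ≥ 0, t ≤ 0 : case 2b
      rcases le_total 0 (c2 - a2) with hs | hs
      · have h1' : 3*b1 + (a1-c1) + (c2-a2) - 3*b2 ≤ b1*(c2-a2) + b2*(a1-c1) := by
          nlinarith [f2, P2]
        have h3' : 3*b1 + 3*b2 + (c2-a2) - (a1-c1) ≤ b1*(c2-a2) + b2*(a1-c1) := by
          nlinarith [e1, P2]
        have h4' : 2*(c2-a2) + 2*(a1-c1) ≤ b1*(c2-a2) + b2*(a1-c1) := by
          nlinarith [g3, P2]
        have := red_lemma b1 (c2-a2) (a1-c1) b2 hm hs (by linarith) (by linarith)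
          hb2 (by linarith) (by linarith) h1' h3' h4'
        linarith
      · -- s ≤ 0 : use red_lemma with s = 0
        have hns : 0 ≤ a2 - c2 := by linarith
        have h1' : 3*b1 + (a1-c1) + 0 - 3*b2 ≤ b1*0 + b2*(a1-c1) := by
          nlinarith [f2, P2, mul_nonneg (by linarith : (0:ℝ) ≤ b1 - 1) hns]
        have h3' : 3*b1 + 3*b2 + 0 - (a1-c1) ≤ b1*0 + b2*(a1-c1) := by
          nlinarith [e1, P2, mul_nonneg (by linarith : (0:ℝ) ≤ b1 - 1) hns]
        have h4' : 2*0 + 2*(a1-c1) ≤ b1*0 + b2*(a1-c1) := by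
          nlinarith [g3, P2, mul_nonneg (by linarith : (0:ℝ) ≤ b1 - 2) hns]
        have := red_lemma b1 0 (a1-c1) b2 hm le_rfl (by linarith) (by linarith)
          hb2 (by linarith) (by linarith) h1' h3' h4'
        linarith
    · -- b2 ≤ 0, t ≥ 0 : case 2a
      rcases le_total 0 (c2 - a2) with hs | hs
      · have h1' : 3*b1 + (c1-a1) + (c2-a2) - 3*(-b2) ≤ b1*(c2-a2) + (-b2)*(c1-a1) := by
          nlinarith [e1, P2]
        have h3' : 3*b1 + 3*(-b2) + (c2-a2) - (c1-a1) ≤ b1*(c2-a2) + (-b2)*(c1-a1) := by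
          nlinarith [f2, P2]
        have h4' : 2*(c2-a2) + 2*(c1-a1) ≤ b1*(c2-a2) + (-b2)*(c1-a1) := by
          nlinarith [g4, P2]
        have := red_lemma b1 (c2-a2) (c1-a1) (-b2) hm hs ht (by linarith)
          (by linarith) (by linarith) (by linarith) h1' h3' h4'
        linarith
      · have hns : 0 ≤ a2 - c2 := by linarith
        have h1' : 3*b1 + (c1-a1) + 0 - 3*(-b2) ≤ b1*0 + (-b2)*(c1-a1) := by
          nlinarith [e1, P2, mul_nonneg (by linarith : (0:ℝ) ≤ b1 - 1) hns]
        have h3' : 3*b1 + 3*(-b2) + 0 - (c1-a1) ≤ b1*0 + (-b2)*(c1-a1) := by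
          nlinarith [f2, P2, mul_nonneg (by linarith : (0:ℝ) ≤ b1 - 1) hns]
        have h4' : 2*0 + 2*(c1-a1) ≤ b1*0 + (-b2)*(c1-a1) := by
          nlinarith [g4, P2, mul_nonneg (by linarith : (0:ℝ) ≤ b1 - 2) hns]
        have := red_lemma b1 0 (c1-a1) (-b2) hm le_rfl ht (by linarith)
          (by linarith) (by linarith) (by linarith) h1' h3' h4'
        linarith
    · -- b2 ≤ 0, t ≤ 0 : easy
      rcases le_total 0 (c2 - a2) with hs | hs
      · nlinarith [mul_nonneg (by linarith : (0:ℝ) ≤ -b2) (by linarith : (0:ℝ) ≤ -(c1-a1)),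
          mul_nonneg (by linarith : (0:ℝ) ≤ b1 - 1) (by linarith : (0:ℝ) ≤ 2*b1 - (c2 - a2))]
      · nlinarith [mul_nonneg (by linarith : (0:ℝ) ≤ -b2) (by linarith : (0:ℝ) ≤ -(c1-a1)),
          mul_nonpos_iff.2 (Or.inl ⟨hb1, hs⟩)]
theorem core (a1 a2 b1 b2 c1 c2 L : ℝ)
    (s1 : a1 + b1 + c1 = 0) (s2 : a2 + b2 + c2 = 0)
    (hd : 0 < a1*b2 - a2*b1)
    (E1 : (b2-a2) + (b1-a1) ≤ a1*b2 - a2*b1)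
    (E2 : (b2-a2) - (b1-a1) ≤ a1*b2 - a2*b1)
    (E3 : -(b2-a2) + (b1-a1) ≤ a1*b2 - a2*b1)
    (E4 : -(b2-a2) - (b1-a1) ≤ a1*b2 - a2*b1)
    (F1 : (c2-b2) + (c1-b1) ≤ a1*b2 - a2*b1)
    (F2 : (c2-b2) - (c1-b1) ≤ a1*b2 - a2*b1)
    (F3 : -(c2-b2) + (c1-b1) ≤ a1*b2 - a2*b1)
    (F4 : -(c2-b2) - (c1-b1) ≤ a1*b2 - a2*b1)
    (G1 : (a2-c2) + (a1-c1) ≤ a1*b2 - a2*b1)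
    (G2 : (a2-c2) - (a1-c1) ≤ a1*b2 - a2*b1)
    (G3 : -(a2-c2) + (a1-c1) ≤ a1*b2 - a2*b1)
    (G4 : -(a2-c2) - (a1-c1) ≤ a1*b2 - a2*b1)
    (Ba1 : |a1| ≤ L)
    (Ba2 : |a2| ≤ L)
    (Bb1 : |b1| ≤ L)
    (Bb2 : |b2| ≤ L)
    (Bc1 : |c1| ≤ L)
    (Bc2 : |c2| ≤ L)
    : 5 ≤ 2 * L := by
  have pa1 := le_abs_self a1
  have na1 := neg_abs_le a1
  have pa2 := le_abs_self a2
  have na2 := neg_abs_le a2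
  have pb1 := le_abs_self b1
  have nb1 := neg_abs_le b1
  have pb2 := le_abs_self b2
  have nb2 := neg_abs_le b2
  have pc1 := le_abs_self c1
  have nc1 := neg_abs_le c1
  have pc2 := le_abs_self c2
  have nc2 := neg_abs_le c2
  set M : ℝ := max (max (max (max (max |a1| |a2|) |b1|) |b2|) |c1|) |c2| with hMdef
  have hMa1 : |a1| ≤ M := by rw [hMdef]; simp [le_max_iff]
  have hMa2 : |a2| ≤ M := by rw [hMdef]; simp [le_max_iff]
  have hMb1 : |b1| ≤ M := by rw [hMdef]; simp [le_max_iff]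
  have hMb2 : |b2| ≤ M := by rw [hMdef]; simp [le_max_iff]
  have hMc1 : |c1| ≤ M := by rw [hMdef]; simp [le_max_iff]
  have hMc2 : |c2| ≤ M := by rw [hMdef]; simp [le_max_iff]
  have hML : M ≤ L := by
    rw [hMdef]; simp only [max_le_iff]
    exact ⟨⟨⟨⟨⟨Ba1, Ba2⟩, Bb1⟩, Bb2⟩, Bc1⟩, Bc2⟩
  have hchoice : M = |a1| ∨ M = |a2| ∨ M = |b1| ∨ M = |b2| ∨ M = |c1| ∨ M = |c2| := by
    rw [hMdef]
    rcases max_choice (max (max (max (max |a1| |a2|) |b1|) |b2|) |c1|) |c2| with h|h <;> rw [h]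
    · rcases max_choice (max (max (max |a1| |a2|) |b1|) |b2|) |c1| with h2|h2 <;> rw [h2]
      · rcases max_choice (max (max |a1| |a2|) |b1|) |b2| with h3|h3 <;> rw [h3]
        · rcases max_choice (max |a1| |a2|) |b1| with h4|h4 <;> rw [h4]
          · rcases max_choice |a1| |a2| with h5|h5 <;> rw [h5]
            · exact Or.inl rfl
            · exact Or.inr (Or.inl rfl)
          · exact Or.inr (Or.inr (Or.inl rfl))
        · exact Or.inr (Or.inr (Or.inr (Or.inl rfl)))
      · exact Or.inr (Or.inr (Or.inr (Or.inr (Or.inl rfl))))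
    · exact Or.inr (Or.inr (Or.inr (Or.inr (Or.inr rfl))))
  rcases hchoice with hc|hc|hc|hc|hc|hc
  · rcases abs_cases a1 with ⟨hE,_⟩|⟨hE,_⟩
    · -- M = a1
      have hk := key_s13 (c1) (c2) (a1) (a2) (b1) (b2) (a1*b2 - a2*b1)
          (by linarith) (by linarith)
          (by linear_combination ((-1)*a2)*s1 + ((1)*a1)*s2) hd
          (by linarith) (by linarith) (by linarith) (by linarith)
          (by linarith) (by linarith) (by linarith) (by linarith) (by linarith) (by linarith)
      linarith
    · -- M = -a1
      have hk := key_s13 (-c1) (-c2) (-a1) (-a2) (-b1) (-b2) (a1*b2 - a2*b1)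
          (by linarith) (by linarith)
          (by linear_combination ((-1)*a2)*s1 + ((1)*a1)*s2) hd
          (by linarith) (by linarith) (by linarith) (by linarith)
          (by linarith) (by linarith) (by linarith) (by linarith) (by linarith) (by linarith)
      linarith
  · rcases abs_cases a2 with ⟨hE,_⟩|⟨hE,_⟩
    · -- M = a2
      have hk := key_s13 (c2) (-c1) (a2) (-a1) (b2) (-b1) (a1*b2 - a2*b1)
          (by linarith) (by linarith)
          (by linear_combination ((-1)*a2)*s1 + ((1)*a1)*s2) hd
          (by linarith) (by linarith) (by linarith) (by linarith)
          (by linarith) (by linarith) (by linarith) (by linarith) (by linarith) (by linarith)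
      linarith
    · -- M = -a2
      have hk := key_s13 (-c2) (c1) (-a2) (a1) (-b2) (b1) (a1*b2 - a2*b1)
          (by linarith) (by linarith)
          (by linear_combination ((-1)*a2)*s1 + ((1)*a1)*s2) hd
          (by linarith) (by linarith) (by linarith) (by linarith)
          (by linarith) (by linarith) (by linarith) (by linarith) (by linarith) (by linarith)
      linarith
  · rcases abs_cases b1 with ⟨hE,_⟩|⟨hE,_⟩
    · -- M = b1
      have hk := key_s13 (a1) (a2) (b1) (b2) (c1) (c2) (a1*b2 - a2*b1)
          (by linarith) (by linarith)
          (by linear_combination (0:ℝ)*s1) hd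
          (by linarith) (by linarith) (by linarith) (by linarith)
          (by linarith) (by linarith) (by linarith) (by linarith) (by linarith) (by linarith)
      linarith
    · -- M = -b1
      have hk := key_s13 (-a1) (-a2) (-b1) (-b2) (-c1) (-c2) (a1*b2 - a2*b1)
          (by linarith) (by linarith)
          (by linear_combination (0:ℝ)*s1) hd
          (by linarith) (by linarith) (by linarith) (by linarith)
          (by linarith) (by linarith) (by linarith) (by linarith) (by linarith) (by linarith)
      linarith
  · rcases abs_cases b2 with ⟨hE,_⟩|⟨hE,_⟩
    · -- M = b2
      have hk := key_s13 (a2) (-a1) (b2) (-b1) (c2) (-c1) (a1*b2 - a2*b1)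
          (by linarith) (by linarith)
          (by linear_combination (0:ℝ)*s1) hd
          (by linarith) (by linarith) (by linarith) (by linarith)
          (by linarith) (by linarith) (by linarith) (by linarith) (by linarith) (by linarith)
      linarith
    · -- M = -b2
      have hk := key_s13 (-a2) (a1) (-b2) (b1) (-c2) (c1) (a1*b2 - a2*b1)
          (by linarith) (by linarith)
          (by linear_combination (0:ℝ)*s1) hd
          (by linarith) (by linarith) (by linarith) (by linarith)
          (by linarith) (by linarith) (by linarith) (by linarith) (by linarith) (by linarith)
      linarith
  · rcases abs_cases c1 with ⟨hE,_⟩|⟨hE,_⟩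
    · -- M = c1
      have hk := key_s13 (b1) (b2) (c1) (c2) (a1) (a2) (a1*b2 - a2*b1)
          (by linarith) (by linarith)
          (by linear_combination ((1)*b2)*s1 + ((-1)*b1)*s2) hd
          (by linarith) (by linarith) (by linarith) (by linarith)
          (by linarith) (by linarith) (by linarith) (by linarith) (by linarith) (by linarith)
      linarith
    · -- M = -c1
      have hk := key_s13 (-b1) (-b2) (-c1) (-c2) (-a1) (-a2) (a1*b2 - a2*b1)
          (by linarith) (by linarith)
          (by linear_combination ((1)*b2)*s1 + ((-1)*b1)*s2) hd
          (by linarith) (by linarith) (by linarith) (by linarith)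
          (by linarith) (by linarith) (by linarith) (by linarith) (by linarith) (by linarith)
      linarith
  · rcases abs_cases c2 with ⟨hE,_⟩|⟨hE,_⟩
    · -- M = c2
      have hk := key_s13 (b2) (-b1) (c2) (-c1) (a2) (-a1) (a1*b2 - a2*b1)
          (by linarith) (by linarith)
          (by linear_combination ((1)*b2)*s1 + ((-1)*b1)*s2) hd
          (by linarith) (by linarith) (by linarith) (by linarith)
          (by linarith) (by linarith) (by linarith) (by linarith) (by linarith) (by linarith)
      linarith
    · -- M = -c2
      have hk := key_s13 (-b2) (b1) (-c2) (c1) (-a2) (a1) (a1*b2 - a2*b1)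
          (by linarith) (by linarith)
          (by linear_combination ((1)*b2)*s1 + ((-1)*b1)*s2) hd
          (by linarith) (by linarith) (by linarith) (by linarith)
          (by linarith) (by linarith) (by linarith) (by linarith) (by linarith) (by linarith)
      linarith
theorem corner_id (a1 a2 b1 b2 c1 c2 d si ta al be ga : ℝ)
    (s1 : a1 + b1 + c1 = 0) (s2 : a2 + b2 + c2 = 0)
    (hdef : d = a1*b2 - a2*b1)
    (hsum : al + be + ga = 1)
    (hx : al*a1 + be*b1 + ga*c1 = si)
    (hy : al*a2 + be*b2 + ga*c2 = ta) :
    si*(b2-a2) - ta*(b1-a1) = (1-3*ga)*d := by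
  linear_combination ((1)*a2 + (-1)*b2)*hx + ((-1)*a1 + (1)*b1)*hy +
    ((-1)*a2*ga + (1)*b2*ga)*s1 + ((1)*a1*ga + (-1)*b1*ga)*s2 +
    ((-2)*a1*b2 + (2)*a2*b1 + (3)*d)*hsum + (((2):ℝ) + (-3)*al + (-3)*be)*hdef

-- hull3 helper
theorem hull3 (p q r x : ℝ × ℝ) (hx : x ∈ convexHull ℝ ({p, q, r} : Set (ℝ × ℝ))) :
    ∃ al be ga : ℝ, 0 ≤ al ∧ 0 ≤ be ∧ 0 ≤ ga ∧ al + be + ga = 1 ∧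
      al • p + be • q + ga • r = x := by
  rw [show ({p, q, r} : Set (ℝ × ℝ)) = insert p {q, r} by rfl,
     convexHull_insert ⟨q, by simp⟩, mem_convexJoin] at hx
  obtain ⟨a, ha, z, hz, hseg⟩ := hx
  rw [Set.mem_singleton_iff] at ha
  subst ha
  rw [convexHull_pair] at hz
  obtain ⟨u1, v1, hu1, hv1, huv1, hz1⟩ := hz
  obtain ⟨u2, v2, hu2, hv2, huv2, hz2⟩ := hseg
  refine ⟨u2, v2*u1, v2*v1, hu2, mul_nonneg hv2 hu1, mul_nonneg hv2 hv1, by nlinarith, ?_⟩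
  rw [← hz2, ← hz1]
  module
open Pointwise

theorem triangle_parallelogram_centroid_lower_bound
    (p q r : ℝ × ℝ) (hpqr : AffineIndependent ℝ ![p, q, r])
    (hsum : p + q + r = 0)
    (T : Set (ℝ × ℝ)) (hT : T = convexHull ℝ {p, q, r})
    (u v : ℝ × ℝ) (huv : LinearIndependent ℝ ![u, v])
    (P : Set (ℝ × ℝ))
    (hP : P = {x : ℝ × ℝ | ∃ s ∈ Set.Icc (-1 : ℝ) 1, ∃ t ∈ Set.Icc (-1 : ℝ) 1,
      x = s • u + t • v})
    (hPT : P ⊆ T)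
    (lam : ℝ) (hlam : 0 < lam) (hTP : T ⊆ lam • P) :
    lam ≥ 5 / 2 := by
  have hpair := LinearIndependent.pair_iff.mp huv
  -- coordinate extraction for points of T
  have extract : ∀ w : ℝ × ℝ, w ∈ T → ∃ x y : ℝ, w = x • u + y • v ∧ |x| ≤ lam ∧ |y| ≤ lam := by
    intro w hw
    obtain ⟨z, hzP, hzw⟩ := Set.mem_smul_set.mp (hTP hw)
    rw [hP] at hzP
    obtain ⟨s, hs, t, ht, rfl⟩ := hzP
    refine ⟨lam * s, lam * t, ?_, ?_, ?_⟩
    · rw [← hzw, smul_add, smul_smul, smul_smul]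
    · rw [abs_mul, abs_of_pos hlam]
      nlinarith [abs_le.mpr ⟨hs.1, hs.2⟩, abs_nonneg s]
    · rw [abs_mul, abs_of_pos hlam]
      nlinarith [abs_le.mpr ⟨ht.1, ht.2⟩, abs_nonneg t]
  have hpT : p ∈ T := by rw [hT]; exact subset_convexHull ℝ _ (by simp)
  have hqT : q ∈ T := by rw [hT]; exact subset_convexHull ℝ _ (by simp)
  have hrT : r ∈ T := by rw [hT]; exact subset_convexHull ℝ _ (by simp)
  obtain ⟨a1, a2, hpc, ha1, ha2⟩ := extract p hpT
  obtain ⟨b1, b2, hqc, hb1, hb2⟩ := extract q hqT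
  obtain ⟨c1, c2, hrc, hc1, hc2⟩ := extract r hrT
  -- centroid conditions
  have hsums : a1 + b1 + c1 = 0 ∧ a2 + b2 + c2 = 0 := by
    have h0 : (a1 + b1 + c1) • u + (a2 + b2 + c2) • v = 0 := by
      rw [hpc, hqc, hrc] at hsum
      linear_combination (norm := module) hsum
    exact hpair _ _ h0
  obtain ⟨hs1, hs2⟩ := hsums
  -- corners of the parallelogram and their barycentric data
  have hcorn : ∀ si ta : ℝ, si ∈ Set.Icc (-1:ℝ) 1 → ta ∈ Set.Icc (-1:ℝ) 1 →
      ∃ al be ga : ℝ, 0 ≤ al ∧ 0 ≤ be ∧ 0 ≤ ga ∧ al + be + ga = 1 ∧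
        al*a1 + be*b1 + ga*c1 = si ∧ al*a2 + be*b2 + ga*c2 = ta := by
    intro si ta hsi hta
    have hmem : si • u + ta • v ∈ T := hPT (by rw [hP]; exact ⟨si, hsi, ta, hta, rfl⟩)
    rw [hT] at hmem
    obtain ⟨al, be, ga, h0, h1, h2, h3, h4⟩ := hull3 p q r _ hmem
    refine ⟨al, be, ga, h0, h1, h2, h3, ?_, ?_⟩ <;>
    · have h5 : (al*a1 + be*b1 + ga*c1 - si) • u + (al*a2 + be*b2 + ga*c2 - ta) • v = 0 := by
        rw [hpc, hqc, hrc] at h4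
        linear_combination (norm := module) h4
      obtain ⟨e1, e2⟩ := hpair _ _ h5
      linarith
  obtain ⟨aPP, bPP, gPP, haPP, hbPP, hgPP, hsPP, hxPP, hyPP⟩ :=
    hcorn 1 1 (by norm_num) (by norm_num)
  obtain ⟨aPM, bPM, gPM, haPM, hbPM, hgPM, hsPM, hxPM, hyPM⟩ :=
    hcorn 1 (-1) (by norm_num) (by norm_num)
  obtain ⟨aMP, bMP, gMP, haMP, hbMP, hgMP, hsMP, hxMP, hyMP⟩ :=
    hcorn (-1) 1 (by norm_num) (by norm_num)
  obtain ⟨aMM, bMM, gMM, haMM, hbMM, hgMM, hsMM, hxMM, hyMM⟩ :=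
    hcorn (-1) (-1) (by norm_num) (by norm_num)
  -- determinant identities
  have hd2 : a1*b2 - a2*b1 = b1*c2 - b2*c1 := by linear_combination b2*hs1 - b1*hs2
  have hd3 : a1*b2 - a2*b1 = c1*a2 - c2*a1 := by linear_combination (-a2)*hs1 + a1*hs2
  -- the twelve corner identities
  have idE_PP := corner_id a1 a2 b1 b2 c1 c2 (a1*b2 - a2*b1) 1 1 aPP bPP gPP hs1 hs2 rfl hsPP hxPP hyPP
  have idE_PM := corner_id a1 a2 b1 b2 c1 c2 (a1*b2 - a2*b1) 1 (-1) aPM bPM gPM hs1 hs2 rfl hsPM hxPM hyPM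
  have idE_MP := corner_id a1 a2 b1 b2 c1 c2 (a1*b2 - a2*b1) (-1) 1 aMP bMP gMP hs1 hs2 rfl hsMP hxMP hyMP
  have idE_MM := corner_id a1 a2 b1 b2 c1 c2 (a1*b2 - a2*b1) (-1) (-1) aMM bMM gMM hs1 hs2 rfl hsMM hxMM hyMM
  have idF_PP := corner_id b1 b2 c1 c2 a1 a2 (a1*b2 - a2*b1) 1 1 bPP gPP aPP
    (by linarith) (by linarith) hd2 (by linarith) (by linarith [hxPP]) (by linarith [hyPP])
  have idF_PM := corner_id b1 b2 c1 c2 a1 a2 (a1*b2 - a2*b1) 1 (-1) bPM gPM aPM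
    (by linarith) (by linarith) hd2 (by linarith) (by linarith [hxPM]) (by linarith [hyPM])
  have idF_MP := corner_id b1 b2 c1 c2 a1 a2 (a1*b2 - a2*b1) (-1) 1 bMP gMP aMP
    (by linarith) (by linarith) hd2 (by linarith) (by linarith [hxMP]) (by linarith [hyMP])
  have idF_MM := corner_id b1 b2 c1 c2 a1 a2 (a1*b2 - a2*b1) (-1) (-1) bMM gMM aMM
    (by linarith) (by linarith) hd2 (by linarith) (by linarith [hxMM]) (by linarith [hyMM])
  have idG_PP := corner_id c1 c2 a1 a2 b1 b2 (a1*b2 - a2*b1) 1 1 gPP aPP bPP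
    (by linarith) (by linarith) hd3 (by linarith) (by linarith [hxPP]) (by linarith [hyPP])
  have idG_PM := corner_id c1 c2 a1 a2 b1 b2 (a1*b2 - a2*b1) 1 (-1) gPM aPM bPM
    (by linarith) (by linarith) hd3 (by linarith) (by linarith [hxPM]) (by linarith [hyPM])
  have idG_MP := corner_id c1 c2 a1 a2 b1 b2 (a1*b2 - a2*b1) (-1) 1 gMP aMP bMP
    (by linarith) (by linarith) hd3 (by linarith) (by linarith [hxMP]) (by linarith [hyMP])
  have idG_MM := corner_id c1 c2 a1 a2 b1 b2 (a1*b2 - a2*b1) (-1) (-1) gMM aMM bMM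
    (by linarith) (by linarith) hd3 (by linarith) (by linarith [hxMM]) (by linarith [hyMM])
  rcases lt_trichotomy (a1*b2 - a2*b1) 0 with hneg | hzero | hpos
  · -- negative orientation: apply core with (a, c, b)
    have hD : 0 < a1*c2 - a2*c1 := by linarith [hd3]
    have hDle : (0:ℝ) ≤ a1*c2 - a2*c1 := hD.le
    have core12 :=
      core a1 a2 c1 c2 b1 b2 lam (by linarith) (by linarith) hD
      (by clear * - idG_PM hbPM hDle hd3; nlinarith [idG_PM, mul_nonneg hbPM hDle, hd3])
      (by clear * - idG_PP hbPP hDle hd3; nlinarith [idG_PP, mul_nonneg hbPP hDle, hd3])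
      (by clear * - idG_MM hbMM hDle hd3; nlinarith [idG_MM, mul_nonneg hbMM hDle, hd3])
      (by clear * - idG_MP hbMP hDle hd3; nlinarith [idG_MP, mul_nonneg hbMP hDle, hd3])
      (by clear * - idF_PM haPM hDle hd3; nlinarith [idF_PM, mul_nonneg haPM hDle, hd3])
      (by clear * - idF_PP haPP hDle hd3; nlinarith [idF_PP, mul_nonneg haPP hDle, hd3])
      (by clear * - idF_MM haMM hDle hd3; nlinarith [idF_MM, mul_nonneg haMM hDle, hd3])
      (by clear * - idF_MP haMP hDle hd3; nlinarith [idF_MP, mul_nonneg haMP hDle, hd3])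
      (by clear * - idE_PM hgPM hDle hd3; nlinarith [idE_PM, mul_nonneg hgPM hDle, hd3])
      (by clear * - idE_PP hgPP hDle hd3; nlinarith [idE_PP, mul_nonneg hgPP hDle, hd3])
      (by clear * - idE_MM hgMM hDle hd3; nlinarith [idE_MM, mul_nonneg hgMM hDle, hd3])
      (by clear * - idE_MP hgMP hDle hd3; nlinarith [idE_MP, mul_nonneg hgMP hDle, hd3])
      ha1 ha2 hc1 hc2 hb1 hb2
    linarith
  · -- degenerate: contradiction
    exfalso
    have z1 : (1-3*gPP)*(a1*b2 - a2*b1) = 0 := by rw [hzero]; ring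
    have z2 : (1-3*gPM)*(a1*b2 - a2*b1) = 0 := by rw [hzero]; ring
    have z3 : (1-3*aPP)*(a1*b2 - a2*b1) = 0 := by rw [hzero]; ring
    have z4 : (1-3*aPM)*(a1*b2 - a2*b1) = 0 := by rw [hzero]; ring
    have eb2 : b2 - a2 = 0 := by linarith [idE_PP, idE_PM, z1, z2]
    have eb1 : b1 - a1 = 0 := by linarith [idE_PP, idE_PM, z1, z2]
    have ec2 : c2 - b2 = 0 := by linarith [idF_PP, idF_PM, z3, z4]
    have ec1 : c1 - b1 = 0 := by linarith [idF_PP, idF_PM, z3, z4]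
    have hA1 : a1 = 0 := by linarith
    have hB1 : b1 = 0 := by linarith
    have hC1 : c1 = 0 := by linarith
    have h01 : (0:ℝ) = 1 := by linear_combination hxPP - aPP*hA1 - bPP*hB1 - gPP*hC1
    norm_num at h01
  · -- positive orientation: apply core with (a, b, c)
    have hDle : (0:ℝ) ≤ a1*b2 - a2*b1 := hpos.le
    have core12 :=
      core a1 a2 b1 b2 c1 c2 lam hs1 hs2 hpos
      (by clear * - idE_PM hgPM hDle; nlinarith [idE_PM, mul_nonneg hgPM hDle])
      (by clear * - idE_PP hgPP hDle; nlinarith [idE_PP, mul_nonneg hgPP hDle])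
      (by clear * - idE_MM hgMM hDle; nlinarith [idE_MM, mul_nonneg hgMM hDle])
      (by clear * - idE_MP hgMP hDle; nlinarith [idE_MP, mul_nonneg hgMP hDle])
      (by clear * - idF_PM haPM hDle; nlinarith [idF_PM, mul_nonneg haPM hDle])
      (by clear * - idF_PP haPP hDle; nlinarith [idF_PP, mul_nonneg haPP hDle])
      (by clear * - idF_MM haMM hDle; nlinarith [idF_MM, mul_nonneg haMM hDle])
      (by clear * - idF_MP haMP hDle; nlinarith [idF_MP, mul_nonneg haMP hDle])
      (by clear * - idG_PM hbPM hDle; nlinarith [idG_PM, mul_nonneg hbPM hDle])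
      (by clear * - idG_PP hbPP hDle; nlinarith [idG_PP, mul_nonneg hbPP hDle])
      (by clear * - idG_MM hbMM hDle; nlinarith [idG_MM, mul_nonneg hbMM hDle])
      (by clear * - idG_MP hbMP hDle; nlinarith [idG_MP, mul_nonneg hbMP hDle])
      ha1 ha2 hb1 hb2 hc1 hc2
    linarith
end

section
/- Let Q = [-1,1]³ ⊆ ℝ³ be the cube with vertices (±1,±1,±1), and let Δ = conv{(1,1,1), (1,-1,-1), (-1,1,-1), (-1,-1,1)} be the simplex whose vertices are four pairwise non-adjacent vertices of Q. Then the centroid of Δ is the origin (the center of Q), Δ ⊆ Q, and Q ⊆ 3·Δ. -/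
open Pointwise

lemma combo4 {E : Type*} [AddCommGroup E] [Module ℝ E] {s : Set E} (hs : Convex ℝ s)
    {v1 v2 v3 v4 : E} (h1 : v1 ∈ s) (h2 : v2 ∈ s) (h3 : v3 ∈ s) (h4 : v4 ∈ s)
    {a b c d : ℝ} (ha : 0 ≤ a) (hb : 0 ≤ b) (hc : 0 ≤ c) (hd : 0 ≤ d)
    (hsum : a + b + c + d = 1) :
    a • v1 + b • v2 + c • v3 + d • v4 ∈ s := by
  have := hs.sum_mem (t := Finset.univ) (w := ![a, b, c, d]) (z := ![v1, v2, v3, v4])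
    (by intro i _; fin_cases i <;> assumption)
    (by simp [Fin.sum_univ_four]; linarith)
    (by intro i _; fin_cases i <;> assumption)
  simpa [Fin.sum_univ_four] using this

theorem cube_simplex_ratio_three
    (Q : Set (ℝ × ℝ × ℝ)) (hQ : Q = Set.Icc ((-1, -1, -1) : ℝ × ℝ × ℝ) (1, 1, 1))
    (Δ : Set (ℝ × ℝ × ℝ))
    (hΔ : Δ = convexHull ℝ
      {((1 : ℝ), (1 : ℝ), (1 : ℝ)), (1, -1, -1), (-1, 1, -1), (-1, -1, 1)}) :
    ((1 : ℝ), (1 : ℝ), (1 : ℝ)) + (1, -1, -1) + (-1, 1, -1) + (-1, -1, 1) = (0, 0, 0) ∧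
    Δ ⊆ Q ∧
    Q ⊆ (3 : ℝ) • Δ := by
  refine ⟨by norm_num [Prod.ext_iff], ?_, ?_⟩
  · rw [hΔ, hQ]
    apply convexHull_min _ (convex_Icc _ _)
    intro p hp
    simp only [Set.mem_insert_iff, Set.mem_singleton_iff] at hp
    rcases hp with rfl | rfl | rfl | rfl <;>
      · simp [Set.mem_Icc, Prod.le_def] <;> norm_num
  · rintro ⟨x, y, z⟩ hp
    rw [hQ] at hp
    obtain ⟨⟨hx1, hy1, hz1⟩, hx2, hy2, hz2⟩ :
        ((-1 ≤ x ∧ -1 ≤ y ∧ -1 ≤ z) ∧ (x ≤ 1 ∧ y ≤ 1 ∧ z ≤ 1)) := by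
      simpa [Set.mem_Icc, Prod.le_def] using hp
    refine Set.mem_smul_set.mpr ⟨((x / 3, y / 3, z / 3) : ℝ × ℝ × ℝ), ?_, ?_⟩
    · rw [hΔ]
      have heq : ((x / 3, y / 3, z / 3) : ℝ × ℝ × ℝ) =
          ((3 + x + y + z) / 12) • ((1 : ℝ), (1 : ℝ), (1 : ℝ)) +
          ((3 + x - y - z) / 12) • ((1 : ℝ), (-1 : ℝ), (-1 : ℝ)) +
          ((3 - x + y - z) / 12) • ((-1 : ℝ), (1 : ℝ), (-1 : ℝ)) +
          ((3 - x - y + z) / 12) • ((-1 : ℝ), (-1 : ℝ), (1 : ℝ)) := by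
        simp only [Prod.smul_mk, Prod.mk_add_mk, smul_eq_mul, Prod.mk.injEq]
        refine ⟨by ring, by ring, by ring⟩
      rw [heq]
      apply combo4 (convex_convexHull ℝ _)
      · exact subset_convexHull ℝ _ (by simp)
      · exact subset_convexHull ℝ _ (by simp)
      · exact subset_convexHull ℝ _ (by simp)
      · exact subset_convexHull ℝ _ (by simp)
      all_goals first | linarith | ring
    · simp only [Prod.smul_mk, smul_eq_mul, Prod.mk.injEq]
      refine ⟨by ring, by ring, by ring⟩
end
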